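/- arXiv:2504.05943 — 3 statements merged into one kernel-verified Lean document; each statement's English description precedes it below -/
import Mathlib

section
/- Let k ≥ 0 and let n, m be nonnegative integers. Then n = ∂^k(n+m) if and only if ∂_k(n) + δ_k(n+m) = m. -/
/-- Fold a function `g` over the terms `(a_t, t)` of the unique Macaulay-type
representation `n = C(a_{k+1}, k+1) + ⋯ + C(a_i, i)` with
`a_{k+1} > ⋯ > a_i ≥ i ≥ 1`, computed greedily: at each level `t` (from `k+1`
down), `a_t` is the largest `a` with `C(a, t) ≤` the current remainder. -/
def macRepFold (g : ℕ → ℕ → ℕ) : ℕ → ℕ → ℕ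
  | 0, _ => 0
  | t + 1, n =>
    if n = 0 then 0
    else
      let a := Nat.findGreatest (fun a => Nat.choose a (t + 1) ≤ n) (n + t + 1)
      g a (t + 1) + macRepFold g t (n - Nat.choose a (t + 1))

/-- The combinatorial shadow function `∂_k(n) = Σ_t C(a_t, t - 1)`. -/
def partialLower (k n : ℕ) : ℕ := macRepFold (fun a t => Nat.choose a (t - 1)) (k + 1) n

/-- The combinatorial shadow function `∂^k(n) = Σ_t C(a_t - 1, t)`. -/
def partialUpper (k n : ℕ) : ℕ := macRepFold (fun a t => Nat.choose (a - 1) t) (k + 1) n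

/-- The error function `δ_k(n) = #{t : a_t = t}`. -/
def deltaErr (k n : ℕ) : ℕ := macRepFold (fun a t => if a = t then 1 else 0) (k + 1) n

/-- The function `d^k(n) = Σ_t C(a_t + 1, t)`. -/
def dUpper (k n : ℕ) : ℕ := macRepFold (fun a t => Nat.choose (a + 1) t) (k + 1) n

/-!
Write `U`, `L`, `δ` for `∂^k`, `∂_k`, `δ_k`. Peeling the top term `C(a, t+1)` off a
representation and using Pascal's rule `C(a+1, t+1) = C(a, t+1) + C(a, t)`, an induction on the
number of levels gives `U N + L (U N) + δ N = N` and `U (s + L s) = s`. The second identity makes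
`s ↦ s + L s` injective. Now if `n = U (n+m)` the first identity reads `n + L n + δ (n+m) = n+m`;
conversely, if `L n + δ (n+m) = m`, then `n` and `U (n+m)` have the same image `n + m - δ (n+m)`
under `s ↦ s + L s`, so they are equal.
-/

open Nat

lemma lt_choose_add_succ (n t : ℕ) : n < (n + t + 1).choose (t + 1) :=
  calc n < n + 1 := n.lt_succ_self
    _ = (n + 1).choose n := (choose_succ_self_right n).symm
    _ ≤ (n + t + 1).choose n := choose_le_choose n (by omega)
    _ = (n + t + 1).choose (t + 1) := by rw [add_assoc, choose_symm_add]

lemma exists_choose_le_lt {t n : ℕ} (hn : n ≠ 0) :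
    ∃ a, t + 1 ≤ a ∧ a.choose (t + 1) ≤ n ∧ n < (a + 1).choose (t + 1) := by
  set P : ℕ → Prop := fun a => a.choose (t + 1) ≤ n
  have hP : P (t + 1) := by simp only [P, choose_self]; omega
  set a := Nat.findGreatest P (n + t + 1)
  refine ⟨a, le_findGreatest (by omega) hP, findGreatest_spec (by omega) hP, ?_⟩
  by_contra! h
  have ha : a + 1 ≤ n + t + 1 := by
    by_contra! h'
    have := choose_le_choose (t + 1) h'.le
    have := lt_choose_add_succ n t
    omega
  exact findGreatest_is_greatest (lt_succ_self a) ha h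

lemma sub_choose_lt_choose {t n a : ℕ} (h1 : a.choose (t + 1) ≤ n)
    (h2 : n < (a + 1).choose (t + 1)) : n - a.choose (t + 1) < a.choose t := by
  rw [choose_succ_succ'] at h2
  omega

lemma macRepFold_zero_right (g : ℕ → ℕ → ℕ) (T : ℕ) : macRepFold g T 0 = 0 := by
  cases T <;> simp [macRepFold]

lemma macRepFold_succ_of_choose_le_lt (g : ℕ → ℕ → ℕ) {t n a : ℕ} (ha : t + 1 ≤ a)
    (h1 : a.choose (t + 1) ≤ n) (h2 : n < (a + 1).choose (t + 1)) :
    macRepFold g (t + 1) n = g a (t + 1) + macRepFold g t (n - a.choose (t + 1)) := by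
  have hn : n ≠ 0 := ((choose_pos ha).trans_le h1).ne'
  have ha_le : a ≤ n + t + 1 := by
    by_contra! h
    have := choose_le_choose (t + 1) h.le
    have := lt_choose_add_succ n t
    omega
  have hgreatest : Nat.findGreatest (fun a => a.choose (t + 1) ≤ n) (n + t + 1) = a := by
    refine findGreatest_eq_iff.2 ⟨ha_le, fun _ => h1, fun b hab _ hb => ?_⟩
    have := choose_le_choose (t + 1) (show a + 1 ≤ b from hab)
    omega
  rw [macRepFold, if_neg hn, hgreatest]

-- `partialUpper k` is `upperShadowAt (k + 1)`, and similarly for the other two: the inductions run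
-- over the number of levels.
def upperShadowAt (T n : ℕ) : ℕ := macRepFold (fun a t => (a - 1).choose t) T n

def lowerShadowAt (T n : ℕ) : ℕ := macRepFold (fun a t => a.choose (t - 1)) T n

def deltaErrAt (T n : ℕ) : ℕ := macRepFold (fun a t => if a = t then 1 else 0) T n

@[simp] lemma upperShadowAt_zero_right (T : ℕ) : upperShadowAt T 0 = 0 :=
  macRepFold_zero_right _ T

@[simp] lemma lowerShadowAt_zero_right (T : ℕ) : lowerShadowAt T 0 = 0 :=
  macRepFold_zero_right _ T

@[simp] lemma deltaErrAt_zero_right (T : ℕ) : deltaErrAt T 0 = 0 :=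
  macRepFold_zero_right _ T

section Succ

variable {t n a : ℕ}

lemma upperShadowAt_succ (ha : t + 1 ≤ a) (h1 : a.choose (t + 1) ≤ n)
    (h2 : n < (a + 1).choose (t + 1)) :
    upperShadowAt (t + 1) n = (a - 1).choose (t + 1) + upperShadowAt t (n - a.choose (t + 1)) :=
  macRepFold_succ_of_choose_le_lt _ ha h1 h2

lemma lowerShadowAt_succ (ha : t + 1 ≤ a) (h1 : a.choose (t + 1) ≤ n)
    (h2 : n < (a + 1).choose (t + 1)) :
    lowerShadowAt (t + 1) n = a.choose t + lowerShadowAt t (n - a.choose (t + 1)) :=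
  macRepFold_succ_of_choose_le_lt _ ha h1 h2

lemma deltaErrAt_succ (ha : t + 1 ≤ a) (h1 : a.choose (t + 1) ≤ n)
    (h2 : n < (a + 1).choose (t + 1)) :
    deltaErrAt (t + 1) n = (if a = t + 1 then 1 else 0) + deltaErrAt t (n - a.choose (t + 1)) :=
  macRepFold_succ_of_choose_le_lt _ ha h1 h2

end Succ

lemma pos_or_eq_zero_of_lt_choose {r a T : ℕ} (h : r < a.choose T) : 0 < T ∨ r = 0 := by
  cases T <;> simp_all

lemma choose_self_le_lt_choose_succ {T r : ℕ} (hr0 : r ≠ 0) (hr : r ≤ T + 1) :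
    (T + 1).choose (T + 1) ≤ r ∧ r < (T + 1 + 1).choose (T + 1) := by
  rw [choose_self, choose_succ_self_right]
  omega

lemma upperShadowAt_eq_zero_of_le {T r : ℕ} (hr : r ≤ T) : upperShadowAt T r = 0 := by
  induction T generalizing r with
  | zero => simp [le_zero.1 hr]
  | succ T ih =>
    rcases eq_or_ne r 0 with rfl | hr0
    · simp
    obtain ⟨h1, h2⟩ := choose_self_le_lt_choose_succ hr0 hr
    rw [upperShadowAt_succ le_rfl h1 h2, choose_eq_zero_of_lt (by omega), ih (by simp; omega)]

lemma deltaErrAt_eq_self_of_le {T r : ℕ} (hr : r ≤ T) : deltaErrAt T r = r := by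
  induction T generalizing r with
  | zero => simp [le_zero.1 hr]
  | succ T ih =>
    rcases eq_or_ne r 0 with rfl | hr0
    · simp
    obtain ⟨h1, h2⟩ := choose_self_le_lt_choose_succ hr0 hr
    rw [deltaErrAt_succ le_rfl h1 h2, if_pos rfl, ih (by simp; omega), choose_self]
    omega

lemma add_lowerShadowAt_lt {T s c : ℕ} (hs : s < c.choose T) :
    s + lowerShadowAt T s < (c + 1).choose T := by
  induction T generalizing s c with
  | zero => simp_all
  | succ T ih =>
    have hc : T + 1 ≤ c := by
      by_contra! hc
      rw [choose_eq_zero_of_lt hc] at hs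
      omega
    rcases eq_or_ne s 0 with rfl | hs0
    · simpa using choose_pos (hc.trans c.le_succ)
    obtain ⟨a, ha, h1, h2⟩ := exists_choose_le_lt (t := T) hs0
    have hac : a + 1 ≤ c := by
      by_contra! hac
      have := choose_le_choose (T + 1) (le_of_lt_succ hac)
      omega
    have := ih (sub_choose_lt_choose h1 h2)
    have hmono := choose_le_choose (T + 1) (show a + 1 + 1 ≤ c + 1 by omega)
    rw [choose_succ_succ' (a + 1), choose_succ_succ' a] at hmono
    rw [lowerShadowAt_succ ha h1 h2]
    omega

lemma upperShadowAt_lt {T r c : ℕ} (hr : r < c.choose T) (hc : T < c) :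
    upperShadowAt T r < (c - 1).choose T := by
  induction T generalizing r c with
  | zero => simp_all
  | succ T ih =>
    have hpos : 0 < (c - 1).choose (T + 1) := choose_pos (by omega)
    rcases eq_or_ne r 0 with rfl | hr0
    · simpa using hpos
    obtain ⟨a, ha, h1, h2⟩ := exists_choose_le_lt (t := T) hr0
    have hac : a < c := by
      by_contra! hac
      have := choose_le_choose (T + 1) hac
      omega
    have hrest := sub_choose_lt_choose h1 h2
    rw [upperShadowAt_succ ha h1 h2]
    rcases ha.eq_or_lt with rfl | ha
    · rw [choose_succ_self_right] at hrest
      rw [upperShadowAt_eq_zero_of_le (by omega), choose_eq_zero_of_lt (by omega)]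
      exact hpos
    · obtain ⟨b, rfl⟩ : ∃ b, a = b + 1 := ⟨a - 1, by omega⟩
      have := ih hrest (by omega)
      have hmono := choose_le_choose (T + 1) (show b + 1 ≤ c - 1 by omega)
      rw [choose_succ_succ'] at hmono
      simp only [add_tsub_cancel_right] at this ⊢
      omega

-- With no levels only `0` is represented: `macRepFold g 0 = 0`.
theorem upperShadowAt_add_lowerShadowAt_add_deltaErrAt {T N : ℕ} (hN : 0 < T ∨ N = 0) :
    upperShadowAt T N + lowerShadowAt T (upperShadowAt T N) + deltaErrAt T N = N := by
  induction T generalizing N with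
  | zero =>
    obtain rfl : N = 0 := by omega
    simp
  | succ T ih =>
    rcases eq_or_ne N 0 with rfl | hN0
    · simp
    obtain ⟨a, ha, h1, h2⟩ := exists_choose_le_lt (t := T) hN0
    have hrest := sub_choose_lt_choose h1 h2
    rw [upperShadowAt_succ ha h1 h2, deltaErrAt_succ ha h1 h2]
    rcases ha.eq_or_lt with rfl | ha
    · -- the remaining terms are `C(T, T) + C(T-1, T-1) + ⋯`, with `a_t = t`
      rw [choose_self] at h1 hrest ⊢
      have hrest' : N - 1 ≤ T := by rw [choose_succ_self_right] at hrest; omega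
      rw [upperShadowAt_eq_zero_of_le hrest', deltaErrAt_eq_self_of_le hrest',
        add_tsub_cancel_right, choose_eq_zero_of_lt (lt_succ_self T), if_pos rfl, zero_add,
        lowerShadowAt_zero_right]
      omega
    · obtain ⟨b, rfl⟩ : ∃ b, a = b + 1 := ⟨a - 1, by omega⟩
      simp only [add_tsub_cancel_right]
      have hU := upperShadowAt_lt hrest (by omega)
      simp only [add_tsub_cancel_right] at hU
      have hpascal := choose_succ_succ' b T
      rw [lowerShadowAt_succ (a := b) (by omega) (by omega) (by omega), if_neg (by omega),
        add_tsub_cancel_left]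
      have := ih (pos_or_eq_zero_of_lt_choose hrest)
      omega

theorem upperShadowAt_add_lowerShadowAt {T s : ℕ} (hs : 0 < T ∨ s = 0) :
    upperShadowAt T (s + lowerShadowAt T s) = s := by
  induction T generalizing s with
  | zero =>
    obtain rfl : s = 0 := by omega
    simp
  | succ T ih =>
    rcases eq_or_ne s 0 with rfl | hs0
    · simp
    obtain ⟨a, ha, h1, h2⟩ := exists_choose_le_lt (t := T) hs0
    have hrest := sub_choose_lt_choose h1 h2
    rw [lowerShadowAt_succ ha h1 h2]
    set r := s - a.choose (T + 1)
    have hM := add_lowerShadowAt_lt hrest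
    have hpascal := choose_succ_succ' a T
    have hpascal' := choose_succ_succ' (a + 1) T
    have hsub : s + (a.choose T + lowerShadowAt T r) - (a + 1).choose (T + 1) =
        r + lowerShadowAt T r := by omega
    rw [upperShadowAt_succ (a := a + 1) (by omega) (by omega) (by omega), add_tsub_cancel_right,
      hsub, ih (pos_or_eq_zero_of_lt_choose hrest)]
    omega

lemma add_lowerShadowAt_injective {T : ℕ} (hT : 0 < T) :
    Function.Injective fun s => s + lowerShadowAt T s :=
  Function.LeftInverse.injective (g := upperShadowAt T) fun _ =>
    upperShadowAt_add_lowerShadowAt (Or.inl hT)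

/-- Theorem 1.3(b): `n = ∂^k(n+m)` if and only if `∂_k(n) + δ_k(n+m) = m`. -/
theorem eq_partialUpper_iff_partialLower_add_deltaErr (k n m : ℕ) :
    n = partialUpper k (n + m) ↔ partialLower k n + deltaErr k (n + m) = m := by
  change n = upperShadowAt (k + 1) (n + m) ↔
    lowerShadowAt (k + 1) n + deltaErrAt (k + 1) (n + m) = m
  have hT : 0 < k + 1 := k.succ_pos
  have key := upperShadowAt_add_lowerShadowAt_add_deltaErrAt (N := n + m) (Or.inl hT)
  constructor
  · intro h
    rw [← h] at key
    omega
  · intro h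
    set u := upperShadowAt (k + 1) (n + m)
    exact add_lowerShadowAt_injective hT
      (show n + lowerShadowAt (k + 1) n = u + lowerShadowAt (k + 1) u by omega)
end

section
/- For every nonnegative integer n and every k ≥ 0, one has δ_k(n) = n − ∂^k(n) − ∂_k(∂^k(n)). -/
lemma sub_le_choose (m k : ℕ) : m - k ≤ m.choose (k+1) := by
  induction m with
  | zero => simp
  | succ m ih =>
    rcases lt_or_ge m k with h | h
    · exact le_trans (by omega) (Nat.zero_le _)
    · have h1 : 1 ≤ m.choose k := Nat.choose_pos h
      rw [Nat.choose_succ_succ']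
      omega

lemma pascal (a t : ℕ) (h : 1 ≤ a) :
    a.choose (t+1) = (a-1).choose t + (a-1).choose (t+1) := by
  obtain ⟨b, rfl⟩ : ∃ b, a = b + 1 := ⟨a - 1, by omega⟩
  simp [Nat.choose_succ_succ']

lemma macRepFold_zero (g : ℕ → ℕ → ℕ) (t : ℕ) : macRepFold g t 0 = 0 := by
  cases t <;> simp [macRepFold]

lemma macRepFold_succ (g : ℕ → ℕ → ℕ) (t n : ℕ) (hn : n ≠ 0) :
    macRepFold g (t+1) n =
      g (Nat.findGreatest (fun a => Nat.choose a (t + 1) ≤ n) (n + t + 1)) (t+1) +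
      macRepFold g t (n - Nat.choose
        (Nat.findGreatest (fun a => Nat.choose a (t + 1) ≤ n) (n + t + 1)) (t+1)) := by
  rw [macRepFold]
  simp [hn]

lemma greedy_ge (t n : ℕ) (hn : n ≠ 0) :
    t + 1 ≤ Nat.findGreatest (fun a => Nat.choose a (t+1) ≤ n) (n+t+1) :=
  Nat.le_findGreatest (by omega) (by simpa using Nat.one_le_iff_ne_zero.mpr hn)

lemma greedy_le (t n : ℕ) (hn : n ≠ 0) :
    (Nat.findGreatest (fun a => Nat.choose a (t+1) ≤ n) (n+t+1)).choose (t+1) ≤ n :=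
  Nat.findGreatest_spec (P := fun a => Nat.choose a (t+1) ≤ n) (m := t+1) (by omega)
    (by simpa using Nat.one_le_iff_ne_zero.mpr hn)

lemma greedy_lt (t n : ℕ) (hn : n ≠ 0) :
    n < ((Nat.findGreatest (fun a => Nat.choose a (t+1) ≤ n) (n+t+1)) + 1).choose (t+1) := by
  set a := Nat.findGreatest (fun a => Nat.choose a (t+1) ≤ n) (n+t+1) with ha
  by_cases h : a + 1 ≤ n + t + 1
  · by_contra hc
    exact Nat.findGreatest_is_greatest (lt_add_one a) h (by omega)
  · have hle : a ≤ n + t + 1 := Nat.findGreatest_le _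
    have hae : a = n + t + 1 := by omega
    have h2 := sub_le_choose (n + t + 2) t
    have h3 : n + 2 ≤ (n+t+2).choose (t+1) := by omega
    have he : a + 1 = n + t + 2 := by omega
    rw [he]
    omega

lemma greedy_rem_lt (t n : ℕ) (hn : n ≠ 0) :
    n - (Nat.findGreatest (fun a => Nat.choose a (t+1) ≤ n) (n+t+1)).choose (t+1)
      < (Nat.findGreatest (fun a => Nat.choose a (t+1) ≤ n) (n+t+1)).choose t := by
  have h1 := greedy_le t n hn
  have h2 := greedy_lt t n hn
  have h3 := pascal (Nat.findGreatest (fun a => Nat.choose a (t+1) ≤ n) (n+t+1) + 1) t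
    (by omega)
  simp only [Nat.add_sub_cancel] at h3
  omega

lemma upper_lt (t : ℕ) : ∀ n b : ℕ, n ≠ 0 → n < b.choose t →
    macRepFold (fun a t => Nat.choose (a - 1) t) t n < (b-1).choose t := by
  induction t with
  | zero => intro n b hn h; simp at h; omega
  | succ t ih =>
    intro n b hn h
    rw [macRepFold_succ _ _ _ hn]
    have hge := greedy_ge t n hn
    have hle := greedy_le t n hn
    have hrem := greedy_rem_lt t n hn
    set a := Nat.findGreatest (fun a => Nat.choose a (t+1) ≤ n) (n+t+1) with ha
    set r := n - a.choose (t+1) with hr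
    have hab : a < b := by
      by_contra hc
      have := Nat.choose_le_choose (t+1) (by omega : b ≤ a)
      omega
    have hpas := pascal a t (by omega)
    have hpos : 1 ≤ (a-1).choose t := Nat.choose_pos (by omega)
    have hub : macRepFold (fun a t => Nat.choose (a - 1) t) t r < (a-1).choose t := by
      by_cases hr0 : r = 0
      · rw [hr0, macRepFold_zero]; omega
      · exact ih r a hr0 hrem
    have hmono : a.choose (t+1) ≤ (b-1).choose (t+1) := Nat.choose_le_choose _ (by omega)
    omega

lemma findGreatest_eq (t c m' : ℕ) (hc : t + 1 ≤ c) (hm' : m' < c.choose t) :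
    Nat.findGreatest (fun a => Nat.choose a (t+1) ≤ c.choose (t+1) + m')
      (c.choose (t+1) + m' + t + 1) = c := by
  have hcb : c ≤ c.choose (t+1) + m' + t + 1 := by
    have := sub_le_choose c t
    omega
  have h1 : c ≤ Nat.findGreatest (fun a => Nat.choose a (t+1) ≤ c.choose (t+1) + m')
      (c.choose (t+1) + m' + t + 1) := Nat.le_findGreatest hcb (by omega)
  refine le_antisymm ?_ h1
  by_contra hc2
  push_neg at hc2
  set fg := Nat.findGreatest (fun a => Nat.choose a (t+1) ≤ c.choose (t+1) + m')
    (c.choose (t+1) + m' + t + 1) with hfg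
  have hP : fg.choose (t+1) ≤ c.choose (t+1) + m' :=
    Nat.findGreatest_spec (P := fun a => Nat.choose a (t+1) ≤ c.choose (t+1) + m')
      (m := c) hcb (by omega)
  have h2 : (c+1).choose (t+1) ≤ fg.choose (t+1) := Nat.choose_le_choose _ (by omega)
  have h3 := pascal (c+1) t (by omega)
  simp only [Nat.add_sub_cancel] at h3
  omega

lemma main_lemma : ∀ t n : ℕ, (t = 0 → n = 0) →
    macRepFold (fun a t => if a = t then 1 else 0) t n +
    macRepFold (fun a t => Nat.choose (a-1) t) t n +
    macRepFold (fun a t => Nat.choose a (t-1)) t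
      (macRepFold (fun a t => Nat.choose (a-1) t) t n) = n := by
  intro t
  induction t with
  | zero => intro n h; simp [macRepFold, h rfl]
  | succ t ih =>
    intro n _
    by_cases hn : n = 0
    · simp [hn, macRepFold_zero]
    · rw [macRepFold_succ _ _ _ hn, macRepFold_succ _ _ _ hn]
      have hge := greedy_ge t n hn
      have hle := greedy_le t n hn
      have hrem := greedy_rem_lt t n hn
      set a := Nat.findGreatest (fun a => Nat.choose a (t+1) ≤ n) (n+t+1) with ha
      set r := n - a.choose (t+1) with hr
      have ihr := ih r (by
        intro ht
        subst ht
        simp only [Nat.choose_zero_right] at hrem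
        omega)
      have hUr : macRepFold (fun a t => Nat.choose (a-1) t) t r < (a-1).choose t := by
        by_cases hr0 : r = 0
        · rw [hr0, macRepFold_zero]
          exact Nat.choose_pos (by omega)
        · exact upper_lt t r a hr0 hrem
      set u := macRepFold (fun a t => Nat.choose (a-1) t) t r with hu
      rcases eq_or_lt_of_le hge with heq | hlt
      · -- a = t+1
        have heq' : a = t + 1 := heq.symm
        have hu0 : u = 0 := by
          have h1 : (a-1).choose t = 1 := by rw [heq']; simp
          omega
        have hc0 : (a-1).choose (t+1) = 0 := by
          rw [heq']
          simp [Nat.choose_eq_zero_of_lt]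
        have hc1 : a.choose (t+1) = 1 := by rw [heq']; simp
        rw [hu0, macRepFold_zero] at ihr
        rw [if_pos heq', hc0, hu0, macRepFold_zero]
        omega
      · -- a ≥ t+2
        have hδ : (if a = t + 1 then 1 else 0) = 0 := by rw [if_neg]; omega
        have hc : t + 1 ≤ a - 1 := by omega
        have hpos : 1 ≤ (a-1).choose (t+1) := Nat.choose_pos hc
        have hm : (a-1).choose (t+1) + u ≠ 0 := by omega
        rw [macRepFold_succ _ _ _ hm]
        rw [findGreatest_eq t (a-1) u hc hUr]
        have hadd : (a-1).choose (t+1) + u - (a-1).choose (t+1) = u := by omega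
        rw [hadd, hδ]
        simp only [Nat.add_sub_cancel]
        have hpas := pascal a t (by omega)
        omega


/-- Lemma 2.4: `δ_k(n) = n − ∂^k(n) − ∂_k(∂^k(n))`. -/
theorem deltaErr_eq (k n : ℕ) :
    (deltaErr k n : ℤ) =
      (n : ℤ) - (partialUpper k n : ℤ) - (partialLower k (partialUpper k n) : ℤ) := by
  simp only [deltaErr, partialUpper, partialLower]
  have h := main_lemma (k+1) n (by omega)
  have h2 := congrArg (Nat.cast : ℕ → ℤ) h
  push_cast at h2
  linarith
end

section
/- Let n, m be nonnegative integers and k ≥ 0. If d^k(n) = m, then n = ∂^k(m). -/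
lemma sub_le_choose_succ (a t : ℕ) : a - t ≤ Nat.choose a (t + 1) := by
  induction a with
  | zero => simp
  | succ a ih =>
    rcases le_or_gt t a with h | h
    · have h1 : 1 ≤ Nat.choose a t := Nat.choose_pos h
      have : a + 1 - t = (a - t) + 1 := by omega
      rw [this, Nat.choose_succ_succ']
      omega
    · have : a + 1 - t = 0 := by omega
      simp [this]

lemma macRepFold_step (g : ℕ → ℕ → ℕ) (t n a : ℕ) (hn : n ≠ 0)
    (h1 : Nat.choose a (t + 1) ≤ n) (h2 : n < Nat.choose (a + 1) (t + 1)) :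
    macRepFold g (t + 1) n = g a (t + 1) + macRepFold g t (n - Nat.choose a (t + 1)) := by
  have hb : a ≤ n + t + 1 := by
    have := sub_le_choose_succ a t
    omega
  have hfg : Nat.findGreatest (fun a => Nat.choose a (t + 1) ≤ n) (n + t + 1) = a := by
    have hle : a ≤ Nat.findGreatest (fun a => Nat.choose a (t + 1) ≤ n) (n + t + 1) :=
      Nat.le_findGreatest hb h1
    have hge : Nat.findGreatest (fun a => Nat.choose a (t + 1) ≤ n) (n + t + 1) ≤ a := by
      by_contra hlt
      push_neg at hlt
      have hspec : Nat.choose (Nat.findGreatest (fun a => Nat.choose a (t + 1) ≤ n) (n + t + 1))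
          (t + 1) ≤ n :=
        Nat.findGreatest_spec (P := fun a => Nat.choose a (t + 1) ≤ n) hb h1
      have : Nat.choose (a + 1) (t + 1) ≤
          Nat.choose (Nat.findGreatest (fun a => Nat.choose a (t + 1) ≤ n) (n + t + 1)) (t + 1) :=
        Nat.choose_le_choose _ hlt
      omega
    omega
  simp only [macRepFold, hn, if_false, hfg]

lemma key : ∀ t n c, t ≤ c → n < Nat.choose c t →
    macRepFold (fun a s => Nat.choose (a - 1) s) t
      (macRepFold (fun a s => Nat.choose (a + 1) s) t n) = n ∧
    macRepFold (fun a s => Nat.choose (a + 1) s) t n < Nat.choose (c + 1) t := by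
  intro t
  induction t with
  | zero =>
    intro n c _ hn
    simp only [Nat.choose_zero_right, Nat.lt_one_iff] at hn
    subst hn
    exact ⟨rfl, by simp [macRepFold]⟩
  | succ t ih =>
    intro n c htc hn
    rcases eq_or_ne n 0 with rfl | hn0
    · exact ⟨by simp [macRepFold], Nat.choose_pos (by omega)⟩
    set a := Nat.findGreatest (fun a => Nat.choose a (t + 1) ≤ n) (n + t + 1) with ha
    have hPt : Nat.choose (t + 1) (t + 1) ≤ n := by rw [Nat.choose_self]; omega
    have hta : t + 1 ≤ a := Nat.le_findGreatest (by omega) hPt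
    have hspec : Nat.choose a (t + 1) ≤ n :=
      Nat.findGreatest_spec (P := fun a => Nat.choose a (t + 1) ≤ n) (m := t + 1) (by omega) hPt
    have hub : n < Nat.choose (a + 1) (t + 1) := by
      rcases le_or_gt (a + 1) (n + t + 1) with hle | hlt
      · by_contra hc
        push_neg at hc
        exact Nat.findGreatest_is_greatest (P := fun a => Nat.choose a (t + 1) ≤ n)
          (by omega) hle hc
      · have hae : a ≤ n + t + 1 := Nat.findGreatest_le (n + t + 1)
        have h1 := sub_le_choose_succ (n + t + 1) t
        have : a = n + t + 1 := by omega
        rw [this] at hspec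
        omega
    have hac : a < c := by
      by_contra hc
      push_neg at hc
      have := Nat.choose_le_choose (t + 1) hc
      omega
    have hr : n - Nat.choose a (t + 1) < Nat.choose a t := by
      have := Nat.choose_succ_succ' a t
      omega
    obtain ⟨ih1, ih2⟩ := ih (n - Nat.choose a (t + 1)) a (by omega) hr
    set r := n - Nat.choose a (t + 1) with hrdef
    set m := Nat.choose (a + 1) (t + 1) + macRepFold (fun a s => Nat.choose (a + 1) s) t r
      with hm
    have hd : macRepFold (fun a s => Nat.choose (a + 1) s) (t + 1) n = m :=
      macRepFold_step _ t n a hn0 hspec hub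
    have hm1 : Nat.choose (a + 1) (t + 1) ≤ m := by omega
    have hm2 : m < Nat.choose (a + 2) (t + 1) := by
      have h3 := Nat.choose_succ_succ' (a + 1) t
      have h4 : a + 1 + 1 = a + 2 := rfl
      rw [h4] at h3
      omega
    have hmpos : m ≠ 0 := by
      have : 0 < Nat.choose (a + 1) (t + 1) := Nat.choose_pos (by omega)
      omega
    have hpar : macRepFold (fun a s => Nat.choose (a - 1) s) (t + 1) m =
        Nat.choose a (t + 1) + macRepFold (fun a s => Nat.choose (a - 1) s) t
          (m - Nat.choose (a + 1) (t + 1)) := by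
      have := macRepFold_step (fun a s => Nat.choose (a - 1) s) t m (a + 1) hmpos hm1 hm2
      simpa using this
    refine ⟨?_, ?_⟩
    · rw [hd, hpar]
      have he : m - Nat.choose (a + 1) (t + 1) =
          macRepFold (fun a s => Nat.choose (a + 1) s) t r := by omega
      rw [he, ih1]
      omega
    · rw [hd]
      have : Nat.choose (a + 2) (t + 1) ≤ Nat.choose (c + 1) (t + 1) :=
        Nat.choose_le_choose _ (by omega)
      omega

/-- Lemma 2.5(a), second part: if `d^k(n) = m` then `n = ∂^k(m)`. -/
theorem eq_partialUpper_of_dUpper_eq (k n m : ℕ) (h : dUpper k n = m) :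
    n = partialUpper k m := by
  subst h
  have hn : n < Nat.choose (n + k + 1) (k + 1) := by
    have := sub_le_choose_succ (n + k + 1) k
    omega
  exact ((key (k + 1) n (n + k + 1) (by omega) hn).1).symm
end
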